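/- arXiv:2309.04101 — 2 statements merged into one kernel-verified Lean document; each statement's English description precedes it below -/
import Mathlib

section
/- For every n ≥ 5, the adjacency matrix A(Γ1) of the signed graph Γ1 of order n has −1 as an eigenvalue with multiplicity exactly n − 4. -/
open scoped BigOperators

/-- A signed graph on the vertex set `Fin n`: a simple graph together with a
symmetric `±1` sign on each edge. -/
structure SignedGraph (n : ℕ) where
  G : SimpleGraph (Fin n)
  sign : Fin n → Fin n → ℤ
  sign_symm : ∀ i j, sign i j = sign j i
  sign_pm : ∀ i j, G.Adj i j → sign i j = 1 ∨ sign i j = -1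

namespace SignedGraph

variable {n : ℕ}

open Classical in
/-- The adjacency matrix of a signed graph, as a real matrix. -/
noncomputable def adjMatrix (Γ : SignedGraph n) : Matrix (Fin n) (Fin n) ℝ :=
  fun i j => if Γ.G.Adj i j then (Γ.sign i j : ℝ) else 0

/-- The largest eigenvalue (the index) of a signed graph. -/
noncomputable def lambda1 (Γ : SignedGraph n) : ℝ :=
  sSup (spectrum ℝ Γ.adjMatrix)

/-- The sign of an unordered edge. -/
def signEdge (Γ : SignedGraph n) : Sym2 (Fin n) → ℤ :=
  Sym2.lift ⟨Γ.sign, Γ.sign_symm⟩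

/-- The sign of a walk: the product of the signs of its edges. -/
def walkSign (Γ : SignedGraph n) {u v : Fin n} (w : Γ.G.Walk u v) : ℤ :=
  (w.edges.map Γ.signEdge).prod

/-- A negative cycle: a cycle whose sign is `-1`
(equivalently, with an odd number of negative edges). -/
def IsNegCycle (Γ : SignedGraph n) {u : Fin n} (c : Γ.G.Walk u u) : Prop :=
  c.IsCycle ∧ Γ.walkSign c = -1

/-- A signed graph is unbalanced if it contains a negative cycle. -/
def Unbalanced (Γ : SignedGraph n) : Prop :=
  ∃ (u : Fin n) (c : Γ.G.Walk u u), Γ.IsNegCycle c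

/-- A signed graph is negative-`C₄`-free if it contains no negative 4-cycle. -/
def NegC4Free (Γ : SignedGraph n) : Prop :=
  ∀ (u : Fin n) (c : Γ.G.Walk u u), c.IsCycle → c.length = 4 → Γ.walkSign c ≠ -1

end SignedGraph

/-- The signed graph `Γ₁`: vertices `2,…,n-1` induce an all-positive complete
graph, vertices `0` and `1` are joined to each other by a negative edge and to
vertex `2` by positive edges, and have no other neighbours. -/
def Gamma1 (n : ℕ) : SignedGraph n where
  G :=
    { Adj := fun i j => i ≠ j ∧ (2 ≤ min i.val j.val ∨ max i.val j.val ≤ 2)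
      symm := ⟨by
        intro i j h
        refine ⟨Ne.symm h.1, ?_⟩
        rw [min_comm, max_comm]
        exact h.2⟩
      loopless := ⟨by intro i h; exact h.1 rfl⟩ }
  sign := fun i j =>
    if (i.val = 0 ∧ j.val = 1) ∨ (i.val = 1 ∧ j.val = 0) then -1 else 1
  sign_symm := by
    intro i j
    try dsimp only
    by_cases h : (i.val = 0 ∧ j.val = 1) ∨ (i.val = 1 ∧ j.val = 0)
    · rw [if_pos h, if_pos (by tauto)]
    · rw [if_neg h, if_neg (by tauto)]
  sign_pm := by
    intro i j _
    try dsimp only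
    by_cases h : (i.val = 0 ∧ j.val = 1) ∨ (i.val = 1 ∧ j.val = 0)
    · rw [if_pos h]; right; rfl
    · rw [if_neg h]; left; rfl

/-- The signed graph `Γ₂`: vertices `4,…,n-1` induce an all-positive complete
graph, vertices `2` and `3` are joined by positive edges to all of `4,…,n-1`
(but not to each other), vertices `0` and `1` are joined to each other by a
negative edge and to `2` and `3` by positive edges, and have no other
neighbours. -/
def Gamma2 (n : ℕ) : SignedGraph n where
  G :=
    { Adj := fun i j => i ≠ j ∧
        ((i.val ≤ 1 ∧ j.val ≤ 3) ∨ (j.val ≤ 1 ∧ i.val ≤ 3) ∨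
         (2 ≤ i.val ∧ i.val ≤ 3 ∧ 4 ≤ j.val) ∨ (2 ≤ j.val ∧ j.val ≤ 3 ∧ 4 ≤ i.val) ∨
         (4 ≤ i.val ∧ 4 ≤ j.val))
      symm := ⟨by
        intro i j h
        exact ⟨Ne.symm h.1, by tauto⟩⟩
      loopless := ⟨by intro i h; exact h.1 rfl⟩ }
  sign := fun i j =>
    if (i.val = 0 ∧ j.val = 1) ∨ (i.val = 1 ∧ j.val = 0) then -1 else 1
  sign_symm := by
    intro i j
    try dsimp only
    by_cases h : (i.val = 0 ∧ j.val = 1) ∨ (i.val = 1 ∧ j.val = 0)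
    · rw [if_pos h, if_pos (by tauto)]
    · rw [if_neg h, if_neg (by tauto)]
  sign_pm := by
    intro i j _
    try dsimp only
    by_cases h : (i.val = 0 ∧ j.val = 1) ∨ (i.val = 1 ∧ j.val = 0)
    · rw [if_pos h]; right; rfl
    · rw [if_neg h]; left; rfl


/-- The all-negative complete signed graph `(K_n, -)`. -/
def NegKn (n : ℕ) : SignedGraph n where
  G := ⊤
  sign := fun _ _ => -1
  sign_symm := fun _ _ => rfl
  sign_pm := fun _ _ _ => Or.inr rfl

/-- `Γ` is switching equivalent to `Γ'` (up to a relabelling of the vertices):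
there is a bijection of the vertices matching the underlying graphs and a
`±1`-valued switching function `s` relating the two sign functions. -/
def SwitchingEquiv {n : ℕ} (Γ Γ' : SignedGraph n) : Prop :=
  ∃ e : Fin n ≃ Fin n, ∃ s : Fin n → ℤ, (∀ i, s i = 1 ∨ s i = -1) ∧
    (∀ i j, Γ.G.Adj i j ↔ Γ'.G.Adj (e i) (e j)) ∧
    (∀ i j, Γ.G.Adj i j → Γ.sign i j = s i * Γ'.sign (e i) (e j) * s j)

/-!
Vertices `3, …, n-1` of `Γ₁` are pairwise adjacent, positively joined, and have the same
neighbours outside the clique, so for `j ≥ 4` the vector `e_j - e_3` is an eigenvector of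
`A(Γ₁)` for `-1`. Completing these `n - 4` vectors by `e_0, …, e_3` to a basis makes `A(Γ₁)`
block lower triangular, with the block `-1` of size `n - 4` and a `4 × 4` block whose
characteristic polynomial does not vanish at `-1`.
-/

open Matrix Polynomial

-- The columns of `fromBlocks N 1` are `c`-eigenvectors of `fromBlocks B U L W`.
theorem Matrix.charpoly_fromBlocks_of_eigenvectors {m n R : Type*} [Fintype m] [Fintype n]
    [DecidableEq m] [DecidableEq n] [CommRing R]
    {B : Matrix m m R} {U : Matrix m n R} {L : Matrix n m R} {W : Matrix n n R}
    {N : Matrix m n R} {c : R} (hU : B * N + U = c • N) (hW : L * N + W = c • 1) :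
    (fromBlocks B U L W).charpoly = (B - N * L).charpoly * (X - C c) ^ Fintype.card n := by
  set P : Matrix (m ⊕ n) (m ⊕ n) R := fromBlocks 1 N 0 1
  set Q : Matrix (m ⊕ n) (m ⊕ n) R := fromBlocks 1 (-N) 0 1
  have hPQ : P * Q = 1 := by simp [P, Q, fromBlocks_multiply, fromBlocks_one]
  have hconj : Q * (fromBlocks B U L W * P) = fromBlocks (B - N * L) 0 L (c • 1) := by
    simp only [P, Q, fromBlocks_multiply, Matrix.one_mul, Matrix.mul_one, Matrix.zero_mul,
      Matrix.mul_zero, add_zero, zero_add, Matrix.neg_mul, hU, hW]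
    simp [sub_eq_add_neg]
  calc (fromBlocks B U L W).charpoly
      = (Q * (fromBlocks B U L W * P)).charpoly := by
        rw [charpoly_mul_comm, Matrix.mul_assoc, hPQ, Matrix.mul_one]
    _ = (B - N * L).charpoly * (X - C c) ^ Fintype.card n := by
        rw [hconj, charpoly_fromBlocks_zero₁₂, smul_one_eq_diagonal, charpoly_diagonal,
          Finset.prod_const, Finset.card_univ]

namespace Gamma1

theorem adjMatrix_apply {n : ℕ} (i j : Fin n) : (Gamma1 n).adjMatrix i j =
    if i.val ≠ j.val ∧ (2 ≤ min i.val j.val ∨ max i.val j.val ≤ 2) then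
      if (i.val = 0 ∧ j.val = 1) ∨ (i.val = 1 ∧ j.val = 0) then -1 else 1
    else 0 := by
  classical
  refine if_congr (and_congr_left' Fin.val_ne_iff.symm) ?_ rfl
  simp only [Gamma1]
  push_cast
  rfl

def headBlock : Matrix (Fin 4) (Fin 4) ℝ :=
  !![0, -1, 1, 0; -1, 0, 1, 0; 1, 1, 0, 1; 0, 0, 1, 0]

def cliqueNbrs : Fin 4 → ℝ := ![0, 0, 1, 1]

-- The `0, …, 3` part of `e_j - e_3` for `j ≥ 4`.
def twinDiff : Fin 4 → ℝ := ![0, 0, 0, -1]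

def quotientMatrix (t : ℝ) : Matrix (Fin 4) (Fin 4) ℝ :=
  !![0, -1, 1, 0; -1, 0, 1, 0; 1, 1, 0, 1; 0, 0, t + 1, t]

theorem adjMatrix_submatrix_finSumFinEquiv (m : ℕ) :
    (Gamma1 (4 + m)).adjMatrix.submatrix finSumFinEquiv finSumFinEquiv =
      fromBlocks headBlock (replicateCol (Fin m) cliqueNbrs) (replicateRow (Fin m) cliqueNbrs)
        ((⊤ : SimpleGraph (Fin m)).adjMatrix ℝ) := by
  ext (a | k) (b | l) <;>
    simp only [submatrix_apply, adjMatrix_apply, finSumFinEquiv_apply_left,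
      finSumFinEquiv_apply_right, Fin.val_castAdd, Fin.val_natAdd, fromBlocks_apply₁₁,
      fromBlocks_apply₁₂, fromBlocks_apply₂₁, fromBlocks_apply₂₂, replicateCol_apply,
      replicateRow_apply, SimpleGraph.adjMatrix_apply, SimpleGraph.top_adj,
      le_min_iff, max_le_iff]
  · fin_cases a <;> fin_cases b <;> simp [headBlock]
  · fin_cases a <;> simp [cliqueNbrs] <;> omega
  · fin_cases b <;> simp [cliqueNbrs] <;> omega
  · split_ifs <;> first | rfl | omega

theorem headBlock_mul_twinDiff_add (m : ℕ) :
    headBlock * replicateCol (Fin m) twinDiff + replicateCol (Fin m) cliqueNbrs =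
      (-1 : ℝ) • replicateCol (Fin m) twinDiff := by
  ext a k
  simp only [Matrix.add_apply, mul_apply, replicateCol_apply, Fin.sum_univ_four,
    Matrix.smul_apply]
  fin_cases a <;> simp [twinDiff, cliqueNbrs, headBlock]

theorem cliqueNbrs_mul_twinDiff_add (m : ℕ) :
    replicateRow (Fin m) cliqueNbrs * replicateCol (Fin m) twinDiff +
      (⊤ : SimpleGraph (Fin m)).adjMatrix ℝ = (-1 : ℝ) • 1 := by
  ext k l
  simp only [Matrix.add_apply, mul_apply, replicateRow_apply, replicateCol_apply,
    Fin.sum_univ_four, SimpleGraph.adjMatrix_apply, SimpleGraph.top_adj, ne_eq,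
    Matrix.smul_apply, one_apply]
  split_ifs <;> simp [twinDiff, cliqueNbrs]

theorem headBlock_sub_twinDiff_mul_cliqueNbrs (m : ℕ) :
    headBlock - replicateCol (Fin m) twinDiff * replicateRow (Fin m) cliqueNbrs =
      quotientMatrix m := by
  ext a b
  simp only [Matrix.sub_apply, mul_apply, replicateCol_apply, replicateRow_apply,
    Finset.sum_const, Finset.card_univ, Fintype.card_fin, nsmul_eq_mul]
  fin_cases a <;> fin_cases b <;> simp [twinDiff, cliqueNbrs, headBlock, quotientMatrix, add_comm]

theorem quotientMatrix_charpoly_eval_neg_one (t : ℝ) :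
    (quotientMatrix t).charpoly.eval (-1) = -4 * (t + 1) := by
  rw [eval_charpoly, det_succ_row_zero]
  simp [quotientMatrix, Fin.sum_univ_four, det_fin_three, Fin.succAbove]
  ring

theorem charpoly_adjMatrix (m : ℕ) :
    (Gamma1 (4 + m)).adjMatrix.charpoly = (quotientMatrix m).charpoly * (X - C (-1)) ^ m := by
  rw [← charpoly_reindex finSumFinEquiv.symm, reindex_apply, Equiv.symm_symm,
    adjMatrix_submatrix_finSumFinEquiv,
    charpoly_fromBlocks_of_eigenvectors (headBlock_mul_twinDiff_add m)
      (cliqueNbrs_mul_twinDiff_add m),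
    headBlock_sub_twinDiff_mul_cliqueNbrs, Fintype.card_fin]

end Gamma1

theorem Gamma1_neg_one_multiplicity (n : ℕ) (hn : 5 ≤ n) :
    Polynomial.rootMultiplicity (-1) ((Gamma1 n).adjMatrix.charpoly) = n - 4 := by
  obtain ⟨m, rfl⟩ : ∃ m, n = 4 + m := ⟨n - 4, by omega⟩
  have h_not_root : ¬(Gamma1.quotientMatrix m).charpoly.IsRoot (-1) := by
    rw [IsRoot, Gamma1.quotientMatrix_charpoly_eval_neg_one]
    positivity
  rw [Gamma1.charpoly_adjMatrix, rootMultiplicity_mul_X_sub_C_pow (charpoly_monic _).ne_zero,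
    rootMultiplicity_eq_zero h_not_root]
  omega
end

section
/- Let Γ be a signed graph of order n and let x be a nonnegative unit eigenvector of A(Γ) corresponding to the largest eigenvalue λ1(Γ). If x has at least two zero coordinates, then λ1(Γ) ≤ n − 3. -/
open scoped BigOperators

/-!
Pair the eigenvalue equation with `x`: since `x` is a unit vector, `λ₁ = xᵀ A x`. As `x ≥ 0` and
every entry of `A` is at most `1` off the diagonal and `0` on it, `xᵀ A x ≤ (∑ xₖ)² - 1`. Finally
`x` is supported on at most `n - 2` coordinates, so Cauchy–Schwarz gives `(∑ xₖ)² ≤ n - 2`.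
-/

open Matrix Finset

namespace SignedGraph

variable {n : ℕ}

theorem adjMatrix_apply_self (Γ : SignedGraph n) (k : Fin n) : Γ.adjMatrix k k = 0 := by
  simp [adjMatrix]

theorem adjMatrix_apply_le_one (Γ : SignedGraph n) (k l : Fin n) : Γ.adjMatrix k l ≤ 1 := by
  unfold adjMatrix
  split_ifs with hkl
  · rcases Γ.sign_pm k l hkl with h | h <;> simp [h]
  · exact zero_le_one

end SignedGraph

section QuadraticForm

variable {ι : Type*} [Fintype ι]

theorem dotProduct_mulVec_eq_of_mulVec_eq_smul {A : Matrix ι ι ℝ} {μ : ℝ} {x : ι → ℝ}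
    (hx : A *ᵥ x = μ • x) : x ⬝ᵥ A *ᵥ x = μ * (x ⬝ᵥ x) := by
  rw [hx, dotProduct_smul, smul_eq_mul]

theorem dotProduct_mulVec_mono {A B : Matrix ι ι ℝ} (hAB : ∀ k l, A k l ≤ B k l) {x : ι → ℝ}
    (hx : ∀ k, 0 ≤ x k) : x ⬝ᵥ A *ᵥ x ≤ x ⬝ᵥ B *ᵥ x := by
  simp only [dotProduct, mulVec, mul_sum]
  gcongr with k _ l _
  · exact hx k
  · exact hx l
  · exact hAB k l

theorem dotProduct_mulVec_le_sq_sum_sub [DecidableEq ι] {A : Matrix ι ι ℝ}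
    (hdiag : ∀ k, A k k = 0) (hle : ∀ k l, A k l ≤ 1) {x : ι → ℝ} (hx : ∀ k, 0 ≤ x k) :
    x ⬝ᵥ A *ᵥ x ≤ (∑ k, x k) ^ 2 - x ⬝ᵥ x := by
  have hJ : ∀ k l, A k l ≤ (of (fun _ _ => (1 : ℝ)) - 1) k l := by
    intro k l
    rcases eq_or_ne k l with rfl | hkl
    · simp [hdiag]
    · simpa [one_apply_ne hkl] using hle k l
  calc x ⬝ᵥ A *ᵥ x ≤ x ⬝ᵥ (of (fun _ _ => (1 : ℝ)) - 1) *ᵥ x := dotProduct_mulVec_mono hJ hx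
    _ = (∑ k, x k) ^ 2 - x ⬝ᵥ x := by
      rw [sub_mulVec, one_mulVec, dotProduct_sub]
      simp [mulVec, dotProduct, sq, sum_mul]

end QuadraticForm

theorem sq_sum_le_card_compl_mul_sum_sq {ι : Type*} [Fintype ι] [DecidableEq ι] (t : Finset ι)
    {x : ι → ℝ} (hx : ∀ k ∈ t, x k = 0) : (∑ k, x k) ^ 2 ≤ #tᶜ * ∑ k, x k ^ 2 := by
  have hsupp : ∑ k, x k = ∑ k ∈ tᶜ, x k :=
    (sum_subset (subset_univ _) fun k _ hk => hx k (by simpa using hk)).symm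
  calc (∑ k, x k) ^ 2 = (∑ k ∈ tᶜ, x k) ^ 2 := by rw [hsupp]
    _ ≤ #tᶜ * ∑ k ∈ tᶜ, x k ^ 2 := sq_sum_le_card_mul_sum_sq
    _ ≤ #tᶜ * ∑ k, x k ^ 2 := by
      gcongr
      exact subset_univ tᶜ

theorem lambda1_le_of_two_zero_coordinates
    (n : ℕ) (Γ : SignedGraph n) (x : Fin n → ℝ)
    (hx : Γ.adjMatrix.mulVec x = Γ.lambda1 • x)
    (hnn : ∀ i, 0 ≤ x i) (hunit : ∑ i, x i ^ 2 = 1)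
    (i j : Fin n) (hij : i ≠ j) (hxi : x i = 0) (hxj : x j = 0) :
    Γ.lambda1 ≤ (n : ℝ) - 3 := by
  have hxx : x ⬝ᵥ x = 1 := by simpa [dotProduct, sq] using hunit
  have hquad : Γ.lambda1 ≤ (∑ k, x k) ^ 2 - 1 := by
    have := dotProduct_mulVec_le_sq_sum_sub Γ.adjMatrix_apply_self Γ.adjMatrix_apply_le_one hnn
    rwa [dotProduct_mulVec_eq_of_mulVec_eq_smul hx, hxx, mul_one] at this
  have hcard : (#({i, j} : Finset (Fin n))ᶜ : ℝ) = n - 2 := by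
    have h2 : #({i, j} : Finset (Fin n)) = 2 := card_pair hij
    have : 2 ≤ n := by simpa [h2] using card_le_univ ({i, j} : Finset (Fin n))
    rw [card_compl, h2, Fintype.card_fin, Nat.cast_sub this, Nat.cast_ofNat]
  have hsupp := sq_sum_le_card_compl_mul_sum_sq {i, j} (x := x) (by simp [hxi, hxj])
  rw [hcard, hunit, mul_one] at hsupp
  linarith
end
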